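/- arXiv:1606.07160 — 4 statements merged into one kernel-verified Lean document; each statement's English description precedes it below -/
import Mathlib

section
/- Let q_a, q_b be real numbers with 0 < q_a < 1 and 0 < q_b ≤ 1. Then (q_a - q_b)² ≤ q_a·(1 - q_b)² if and only if q_b² ≤ q_a. In particular, if q_b ≤ q_a then (q_a - q_b)² ≤ q_a·(1 - q_b)². -/
section

variable {R : Type*} [CommRing R]

theorem mul_one_sub_sq_sub_sub_sq (a b : R) :
    a * (1 - b) ^ 2 - (a - b) ^ 2 = (1 - a) * (a - b ^ 2) := by
  ring

variable [LinearOrder R] [IsStrictOrderedRing R]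

theorem sub_sq_le_mul_one_sub_sq_iff {a : R} (b : R) (ha : a < 1) :
    (a - b) ^ 2 ≤ a * (1 - b) ^ 2 ↔ b ^ 2 ≤ a := by
  rw [← sub_nonneg, mul_one_sub_sq_sub_sub_sq, mul_nonneg_iff_of_pos_left (sub_pos.2 ha),
    sub_nonneg]

end

theorem redundant_inequality_constraint_general (qa qb : ℝ)
    (h₂ : qa < 1) (h₃ : 0 < qb) (h₄ : qb ≤ 1) :
    ((qa - qb) ^ 2 ≤ qa * (1 - qb) ^ 2 ↔ qb ^ 2 ≤ qa) ∧
    (qb ≤ qa → (qa - qb) ^ 2 ≤ qa * (1 - qb) ^ 2) := by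
  have hiff := sub_sq_le_mul_one_sub_sq_iff qb h₂
  exact ⟨hiff, fun hba => hiff.2 ((sq_le h₃.le h₄).trans hba)⟩

/-- For `0 < q_a < 1` and `0 < q_b ≤ 1`, `(q_a - q_b)² ≤ q_a(1 - q_b)²` iff
`q_b² ≤ q_a`; in particular the inequality holds whenever `q_b ≤ q_a`. -/
theorem redundant_inequality_constraint (qa qb : ℝ)
    (h₁ : 0 < qa) (h₂ : qa < 1) (h₃ : 0 < qb) (h₄ : qb ≤ 1) :
    ((qa - qb) ^ 2 ≤ qa * (1 - qb) ^ 2 ↔ qb ^ 2 ≤ qa) ∧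
    (qb ≤ qa → (qa - qb) ^ 2 ≤ qa * (1 - qb) ^ 2) :=
  redundant_inequality_constraint_general qa qb h₂ h₃ h₄
end

section
/- Let q₀₁₁, q₁₀₁, q₁₁₀ ∈ (0,1] with q₀₁₁ < 1 satisfy q₁₀₁ = q₁₁₀ and q₀₁₁ ≥ q₁₁₀. Then the convergence-divergence network constraints hold: q₀₁₁ ≥ q₁₀₁, q₁₁₀ ≥ q₁₀₁, and q₀₁₁·(1 - q₁₁₀)² ≥ (q₀₁₁ - q₁₀₁)². -/
theorem mul_one_sub_sq_sub_sq_sub (a p : ℝ) :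
    a * (1 - p) ^ 2 - (a - p) ^ 2 = (1 - a) * (a - p ^ 2) := by
  ring

theorem sq_sub_le_mul_one_sub_sq {a p : ℝ} (ha : a ≤ 1) (hp : 0 ≤ p) (hpa : p ≤ a) :
    (a - p) ^ 2 ≤ a * (1 - p) ^ 2 := by
  have hsq : p ^ 2 ≤ a :=
    calc p ^ 2 = p * p := sq p
      _ ≤ p * 1 := mul_le_mul_of_nonneg_left (hpa.trans ha) hp
      _ ≤ a := by linarith
  rw [← sub_nonneg, mul_one_sub_sq_sub_sq_sub]
  exact mul_nonneg (sub_nonneg.2 ha) (sub_nonneg.2 hsq)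

theorem clock_constraints_imply_network_general (q011 q101 q110 : ℝ)
    (h011' : q011 ≤ 1)
    (h110 : 0 < q110)
    (heq : q101 = q110) (hge : q110 ≤ q011) :
    q101 ≤ q011 ∧ q101 ≤ q110 ∧
    (q011 - q101) ^ 2 ≤ q011 * (1 - q110) ^ 2 := by
  subst heq
  exact ⟨hge, le_rfl, sq_sub_le_mul_one_sub_sq h011' h110.le hge⟩

/-- The three-taxon clock-like tree constraints imply the convergence-
divergence network constraints: `Ω₂ ⊆ Ω₃`. -/
theorem clock_constraints_imply_network (q011 q101 q110 : ℝ)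
    (h011 : 0 < q011) (h011' : q011 ≤ 1) (h011'' : q011 < 1)
    (h101 : 0 < q101) (h101' : q101 ≤ 1)
    (h110 : 0 < q110) (h110' : q110 ≤ 1)
    (heq : q101 = q110) (hge : q110 ≤ q011) :
    q101 ≤ q011 ∧ q101 ≤ q110 ∧
    (q011 - q101) ^ 2 ≤ q011 * (1 - q110) ^ 2 :=
  clock_constraints_imply_network_general q011 q101 q110 h011' h110 heq hge
end

section
/- Let q₀₁₁, q₁₀₁, q₁₁₀ ∈ (0,1] satisfy q₀₁₁ ≥ q₁₀₁, q₁₁₀ ≥ q₁₀₁, and q₁₀₁ ≥ q₀₁₁·q₁₁₀. Then q₀₁₁·(1 - q₁₁₀)² ≥ (q₀₁₁ - q₁₀₁)², q₀₁₁ ≥ q₁₀₁·q₁₁₀, and q₁₁₀ ≥ q₀₁₁·q₁₀₁. Hence the intersection Ω₁ ∩ Ω₃ of the non-clock-like-tree and convergence-network constraint sets is defined exactly by {q₀₁₁ ≥ q₁₀₁, q₁₁₀ ≥ q₁₀₁, q₁₀₁ ≥ q₀₁₁·q₁₁₀}. -/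
theorem sq_sub_le_mul_sq_one_sub {R : Type*} [CommRing R] [LinearOrder R] [IsStrictOrderedRing R]
    {x y z : R} (hx₀ : 0 ≤ x) (hx₁ : x ≤ 1) (hyx : y ≤ x) (hxz : x * z ≤ y) :
    (x - y) ^ 2 ≤ x * (1 - z) ^ 2 := by
  have hsub : x - y ≤ x * (1 - z) := by linarith [mul_one_sub x z]
  calc (x - y) ^ 2 ≤ (x * (1 - z)) ^ 2 := pow_le_pow_left₀ (sub_nonneg.2 hyx) hsub 2
    _ = x * (x * (1 - z) ^ 2) := by ring
    _ ≤ x * (1 - z) ^ 2 := mul_le_of_le_one_left (by positivity) hx₁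

theorem intersection_Omega1_Omega3_general (q011 q101 q110 : ℝ)
    (h011 : 0 < q011) (h011' : q011 ≤ 1)
    (h101 : 0 < q101)
    (h110' : q110 ≤ 1)
    (ha : q101 ≤ q011) (hb : q101 ≤ q110) (hc : q011 * q110 ≤ q101) :
    (q011 - q101) ^ 2 ≤ q011 * (1 - q110) ^ 2 ∧
    q101 * q110 ≤ q011 ∧ q011 * q101 ≤ q110 :=
  ⟨sq_sub_le_mul_sq_one_sub h011.le h011' ha hc,
    (mul_le_of_le_one_right h101.le h110').trans ha,
    (mul_le_of_le_one_left h101.le h011').trans hb⟩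

/-- The intersection `Ω₁ ∩ Ω₃` of the three-taxon non-clock-like tree and
convergence-divergence network constraint sets reduces to
`{q₀₁₁ ≥ q₁₀₁, q₁₁₀ ≥ q₁₀₁, q₁₀₁ ≥ q₀₁₁q₁₁₀}`. -/
theorem intersection_Omega1_Omega3 (q011 q101 q110 : ℝ)
    (h011 : 0 < q011) (h011' : q011 ≤ 1)
    (h101 : 0 < q101) (h101' : q101 ≤ 1)
    (h110 : 0 < q110) (h110' : q110 ≤ 1)
    (ha : q101 ≤ q011) (hb : q101 ≤ q110) (hc : q011 * q110 ≤ q101) :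
    (q011 - q101) ^ 2 ≤ q011 * (1 - q110) ^ 2 ∧
    q101 * q110 ≤ q011 ∧ q011 * q101 ≤ q110 :=
  intersection_Omega1_Omega3_general q011 q101 q110 h011 h011' h101 h110' ha hb hc
end

section
/- In the polynomial ring ℚ[y₁, y₂, q₀₁₁, q₁₀₁, q₁₁₀], the ideal generated by {y₂² - q₀₁₁, y₁²y₂² - q₁₀₁, y₁²y₂² - q₁₁₀} equals the ideal generated by {q₁₀₁ - q₁₁₀, y₂² - q₀₁₁, y₁²q₀₁₁ - q₁₁₀}. -/
open MvPolynomial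

namespace Ideal

variable {R : Type*} [CommRing R]

theorem mul_add_mul_add_mul_mem_span_triple (u v w r s t : R) :
    r * u + s * v + t * w ∈ span ({u, v, w} : Set R) :=
  add_mem (add_mem (mul_mem_left _ r (subset_span (by simp)))
    (mul_mem_left _ s (subset_span (by simp)))) (mul_mem_left _ t (subset_span (by simp)))

/-- Substituting `a = b` in the last two generators, and then replacing one of them by their
difference, does not change the ideal. -/
theorem span_sub_mul_sub_mul_sub_eq (a b c d x : R) :
    span ({a - b, x * a - c, x * a - d} : Set R) = span ({c - d, a - b, x * b - d} : Set R) := by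
  apply le_antisymm <;> rw [span_le] <;> rintro p (rfl | rfl | rfl) <;>
    rw [SetLike.mem_coe]
  · simpa using mul_add_mul_add_mul_mem_span_triple (c - d) (a - b) (x * b - d) 0 1 0
  · convert mul_add_mul_add_mul_mem_span_triple (c - d) (a - b) (x * b - d) (-1) x 1 using 1; ring
  · convert mul_add_mul_add_mul_mem_span_triple (c - d) (a - b) (x * b - d) 0 x 1 using 1; ring
  · convert mul_add_mul_add_mul_mem_span_triple (a - b) (x * a - c) (x * a - d) 0 (-1) 1
      using 1; ring
  · simpa using mul_add_mul_add_mul_mem_span_triple (a - b) (x * a - c) (x * a - d) 1 0 0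
  · convert mul_add_mul_add_mul_mem_span_triple (a - b) (x * a - c) (x * a - d) (-x) 0 1
      using 1; ring

end Ideal

/-- The variables `X 0, …, X 4` stand for `y₁, y₂, q₀₁₁, q₁₀₁, q₁₁₀`. -/
theorem groebner_basis_three_taxon_clock :
    Ideal.span ({X 1 ^ 2 - X 2, X 0 ^ 2 * X 1 ^ 2 - X 3, X 0 ^ 2 * X 1 ^ 2 - X 4} :
        Set (MvPolynomial (Fin 5) ℚ)) =
    Ideal.span ({X 3 - X 4, X 1 ^ 2 - X 2, X 0 ^ 2 * X 2 - X 4} :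
        Set (MvPolynomial (Fin 5) ℚ)) :=
  Ideal.span_sub_mul_sub_mul_sub_eq _ _ _ _ _
end
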